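/- arXiv:2111.13524 — 3 statements merged into one kernel-verified Lean document; each statement's English description precedes it below -/
import Mathlib

section
/- Let Σ = {a_1, …, a_k} be a finite alphabet and L a language over Σ. Then L is a commutative aperiodic language (commutative and recognized by an aperiodic DFA) if and only if L is a finite union of languages of the form U_1 ⧢ U_2 ⧢ ⋯ ⧢ U_k, where each U_j consists only of words over the single letter a_j and, viewed as a language over the unary alphabet {a_j}, is an aperiodic language. -/
open List

def IsCommutativeLang {α : Type} (L : Language α) : Prop :=
  ∀ u v : List α, u ~ v → (u ∈ L ↔ v ∈ L)

def UpClosure {α : Type} (L : Language α) : Language α :=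
  {v | ∃ u ∈ L, u <+ v}

def DownClosure {α : Type} (L : Language α) : Language α :=
  {u | ∃ v ∈ L, u <+ v}

def UpInterior {α : Type} (L : Language α) : Language α :=
  {w | ∃ U : Language α, (∀ x ∈ U, x ∈ L) ∧ UpClosure U = U ∧ w ∈ U}

def DownInterior {α : Type} (L : Language α) : Language α :=
  {w | ∃ U : Language α, (∀ x ∈ U, x ∈ L) ∧ DownClosure U = U ∧ w ∈ U}

def RecognizedBy {α : Type} (L : Language α) (n : ℕ) : Prop :=
  ∃ (σ : Type) (_ : Fintype σ) (M : DFA α σ), Fintype.card σ = n ∧ M.accepts = L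

noncomputable def sc {α : Type} (L : Language α) : ℕ :=
  sInf {n | RecognizedBy L n}

def Nerode {α : Type} (L : Language α) (u v : List α) : Prop :=
  ∀ x : List α, u ++ x ∈ L ↔ v ++ x ∈ L

inductive IsShuffle {α : Type} : List α → List α → List α → Prop
  | nil : IsShuffle [] [] []
  | left (x : α) {u v w : List α} : IsShuffle u v w → IsShuffle (x :: u) v (x :: w)
  | right (y : α) {u v w : List α} : IsShuffle u v w → IsShuffle u (y :: v) (y :: w)

def Shuffle {α : Type} (U V : Language α) : Language α :=
  {w | ∃ u ∈ U, ∃ v ∈ V, IsShuffle u v w}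

def IsPermDFA {α σ : Type} (M : DFA α σ) : Prop :=
  ∀ a : α, Function.Bijective fun q => M.step q a

def IsGroupLang {α : Type} (L : Language α) : Prop :=
  ∃ (σ : Type) (_ : Fintype σ) (M : DFA α σ), IsPermDFA M ∧ M.accepts = L

def wpow {α : Type} (w : List α) (n : ℕ) : List α :=
  (List.replicate n w).flatten

def IsAperiodicDFA {α σ : Type} (M : DFA α σ) : Prop :=
  ∀ (q : σ) (w : List α) (n : ℕ), 1 ≤ n → M.evalFrom q (wpow w n) = q → M.evalFrom q w = q

def IsAperiodicLang {α : Type} (L : Language α) : Prop :=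
  ∃ (σ : Type) (_ : Fintype σ) (M : DFA α σ), IsAperiodicDFA M ∧ M.accepts = L

def ShuffleList {α : Type} : List (Language α) → Language α
  | [] => {([] : List α)}
  | L :: Ls => Shuffle L (ShuffleList Ls)

def UnaryGroupLang {α : Type} (a : α) (U : Language α) : Prop :=
  (∀ w ∈ U, ∀ x ∈ w, x = a) ∧
  ∃ (σ : Type) (_ : Fintype σ) (M : DFA Unit σ), IsPermDFA M ∧
    ∀ n : ℕ, (List.replicate n a ∈ U ↔ List.replicate n () ∈ M.accepts)

def UnaryAperiodicLang {α : Type} (a : α) (U : Language α) : Prop :=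
  (∀ w ∈ U, ∀ x ∈ w, x = a) ∧
  ∃ (σ : Type) (_ : Fintype σ) (M : DFA Unit σ), IsAperiodicDFA M ∧
    ∀ n : ℕ, (List.replicate n a ∈ U ↔ List.replicate n () ∈ M.accepts)

/-!
A commutative language is determined by the letter counts of its words. If it is recognised by an
aperiodic DFA with `N` states, each letter acts on the states by a map whose iterates are constant
from the `N`-th on, so membership of `a₁^c₁ ⋯ a_k^c_k` depends only on the counts `cⱼ` truncated
at `N`. The language is then the union, over the finitely many truncated count vectors `c` it
realises, of the shuffles `U₁ ⧢ ⋯ ⧢ U_k` with `Uⱼ = {aⱼ^m | min m N = cⱼ}`. Conversely, a unary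
aperiodic language is eventually constant, so a finite union of such shuffles is determined by the
counts truncated at a common threshold `T`, and the automaton counting each letter up to `T` is
aperiodic.
-/

theorem Function.iterate_eq_iterate_card_of_aperiodic {σ : Type} [Fintype σ] {f : σ → σ}
    (hf : ∀ x n, 0 < n → Function.IsPeriodicPt f n x → Function.IsFixedPt f x)
    {m : ℕ} (hm : Fintype.card σ ≤ m) (x : σ) : f^[m] x = f^[Fintype.card σ] x := by
  obtain ⟨i, j, hij, heq⟩ := Fintype.exists_ne_map_eq_of_card_lt
    (fun i : Fin (Fintype.card σ + 1) => f^[i] x) (by simp)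
  wlog hlt : i < j generalizing i j
  · exact this j i hij.symm heq.symm (lt_of_le_of_ne (not_lt.mp hlt) hij.symm)
  have hfix : Function.IsFixedPt f (f^[i] x) := by
    refine hf _ (j - i) (by omega) ?_
    rw [Function.IsPeriodicPt, Function.IsFixedPt, ← Function.iterate_add_apply,
      Nat.sub_add_cancel hlt.le]
    exact heq.symm
  have hstable : ∀ n : ℕ, (i : ℕ) ≤ n → f^[n] x = f^[i] x := fun n hn => by
    rw [← Nat.sub_add_cancel hn, Function.iterate_add_apply, (hfix.iterate _).eq]
  rw [hstable m (by omega), hstable (Fintype.card σ) (by omega)]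

theorem DFA.evalFrom_replicate {α σ : Type} (M : DFA α σ) (q : σ) (a : α) (n : ℕ) :
    M.evalFrom q (replicate n a) = (M.step · a)^[n] q := by
  induction n generalizing q with
  | zero => rfl
  | succ n ih => exact ih (M.step q a)

namespace IsAperiodicDFA

variable {α σ : Type} {M : DFA α σ}

theorem isFixedPt_step (hM : IsAperiodicDFA M) (a : α) (q : σ) (n : ℕ) (hn : 0 < n)
    (hq : Function.IsPeriodicPt (M.step · a) n q) : Function.IsFixedPt (M.step · a) q :=
  hM q [a] n hn (by rwa [wpow, flatten_replicate_singleton, DFA.evalFrom_replicate])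

theorem evalFrom_replicate_min [Fintype σ] (hM : IsAperiodicDFA M) {T : ℕ}
    (hT : Fintype.card σ ≤ T) (q : σ) (a : α) (m : ℕ) :
    M.evalFrom q (replicate (min m T) a) = M.evalFrom q (replicate m a) := by
  have hfix := hM.isFixedPt_step a
  rw [DFA.evalFrom_replicate, DFA.evalFrom_replicate]
  rcases le_total m T with hmT | hTm
  · rw [min_eq_left hmT]
  · rw [min_eq_right hTm, Function.iterate_eq_iterate_card_of_aperiodic hfix hT,
      Function.iterate_eq_iterate_card_of_aperiodic hfix (hT.trans hTm)]

theorem evalFrom_flatMap_replicate_min [Fintype σ] (hM : IsAperiodicDFA M) {T : ℕ}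
    (hT : Fintype.card σ ≤ T) (q : σ) (l : List α) (c : α → ℕ) :
    M.evalFrom q (l.flatMap fun a => replicate (min (c a) T) a) =
      M.evalFrom q (l.flatMap fun a => replicate (c a) a) := by
  induction l generalizing q with
  | nil => rfl
  | cons a l ih =>
    rw [flatMap_cons, flatMap_cons, DFA.evalFrom_of_append, DFA.evalFrom_of_append,
      hM.evalFrom_replicate_min hT, ih]

end IsAperiodicDFA

theorem UnaryAperiodicLang.exists_threshold {α : Type} {a : α} {U : Language α}
    (hU : UnaryAperiodicLang a U) :
    ∃ t, ∀ T, t ≤ T → ∀ m, replicate (min m T) a ∈ U ↔ replicate m a ∈ U := by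
  obtain ⟨-, σ, _, M, hM, hUM⟩ := hU
  refine ⟨Fintype.card σ, fun T hT m => ?_⟩
  rw [hUM, hUM, DFA.mem_accepts, DFA.mem_accepts]
  unfold DFA.eval
  rw [hM.evalFrom_replicate_min hT]

def cappedCountDFA (α : Type) [DecidableEq α] (T : ℕ) (A : Set (α → ℕ)) :
    DFA α (α → Fin (T + 1)) where
  step s a := Function.update s a ⟨min (s a + 1) T, by omega⟩
  start _ := 0
  accept := {s | (fun a => (s a : ℕ)) ∈ A}

namespace cappedCountDFA

variable {α : Type} [DecidableEq α] {T : ℕ} {A : Set (α → ℕ)}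

theorem val_evalFrom (s : α → Fin (T + 1)) (w : List α) (a : α) :
    ((cappedCountDFA α T A).evalFrom s w a : ℕ) = min (s a + w.count a) T := by
  induction w generalizing s with
  | nil => rw [DFA.evalFrom_nil, count_nil, add_zero]; omega
  | cons b w ih =>
    rw [DFA.evalFrom_cons, ih]
    by_cases hab : a = b
    · subst hab
      simp only [cappedCountDFA, Function.update_self, count_cons_self]
      omega
    · simp [cappedCountDFA, Function.update_of_ne hab, count_cons_of_ne (Ne.symm hab)]

theorem mem_accepts (w : List α) :
    w ∈ (cappedCountDFA α T A).accepts ↔ (fun a => min (w.count a) T) ∈ A := by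
  have heval : (fun a => ((cappedCountDFA α T A).eval w a : ℕ)) = fun a => min (w.count a) T :=
    funext fun a => by
      unfold DFA.eval
      rw [val_evalFrom]
      simp [cappedCountDFA]
  rw [DFA.mem_accepts, ← heval]
  rfl

theorem isAperiodic : IsAperiodicDFA (cappedCountDFA α T A) := by
  intro q w n hn h
  funext a
  have ha := congrArg (fun s => (s a : ℕ)) h
  have hcount : (wpow w n).count a = n * w.count a := by simp [wpow, count_flatten]
  have hle : w.count a ≤ n * w.count a := Nat.le_mul_of_pos_left _ hn
  simp only [val_evalFrom, hcount] at ha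
  apply Fin.ext
  rw [val_evalFrom]
  omega

end cappedCountDFA

section Counting

namespace IsShuffle

variable {α : Type}

theorem count_eq [BEq α] {u v w : List α} (h : IsShuffle u v w) (a : α) :
    w.count a = u.count a + v.count a := by
  induction h with
  | nil => rfl
  | left x _ ih => rw [count_cons, count_cons, ih]; omega
  | right y _ ih => rw [count_cons, count_cons, ih]; omega

theorem filter_eq {p : α → Bool} {u v w : List α} (h : IsShuffle u v w)
    (hu : ∀ x ∈ u, p x = false) (hv : ∀ x ∈ v, p x = true) : w.filter p = v := by
  induction h with
  | nil => rfl
  | left x _ ih =>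
    rw [filter_cons_of_neg (by simp [hu x mem_cons_self]),
      ih (fun y hy => hu y (mem_cons_of_mem x hy)) hv]
  | right y _ ih =>
    rw [filter_cons_of_pos (hv y mem_cons_self),
      ih hu (fun x hx => hv x (mem_cons_of_mem y hx))]

theorem filter_not_filter (p : α → Bool) (w : List α) :
    IsShuffle (w.filter fun x => !p x) (w.filter p) w := by
  induction w with
  | nil => exact nil
  | cons x w ih =>
    cases hx : p x
    · simpa [filter_cons, hx] using ih.left x
    · simpa [filter_cons, hx] using ih.right x

end IsShuffle

variable {α : Type} [DecidableEq α]

theorem mem_shuffle_iff_of_unary {a : α} {U V : Language α} (hU : ∀ u ∈ U, ∀ x ∈ u, x = a)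
    (hV : ∀ v ∈ V, a ∉ v) (w : List α) :
    w ∈ Shuffle U V ↔ replicate (w.count a) a ∈ U ∧ w.filter (· != a) ∈ V := by
  constructor
  · rintro ⟨u, hu, v, hv, hw⟩
    have hu_eq : u = replicate (w.count a) a := by
      rw [eq_replicate_iff, hw.count_eq, count_eq_zero_of_not_mem (hV v hv),
        count_eq_length.mpr (fun x hx => (hU u hu x hx).symm)]
      exact ⟨rfl, hU u hu⟩
    have hv_eq : w.filter (· != a) = v :=
      hw.filter_eq (fun x hx => by simp [hU u hu x hx])
        (fun x hx => by simpa using fun h : x = a => hV v hv (h ▸ hx))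
    exact ⟨hu_eq ▸ hu, hv_eq ▸ hv⟩
  · rintro ⟨hu, hv⟩
    refine ⟨_, hu, _, hv, ?_⟩
    simpa [bne, ← filter_beq] using IsShuffle.filter_not_filter (· != a) w

theorem mem_shuffleList_map_iff_of_unary {l : List α} (hl : l.Nodup) {U : α → Language α}
    (hU : ∀ a ∈ l, ∀ u ∈ U a, ∀ x ∈ u, x = a) (w : List α) :
    w ∈ ShuffleList (l.map U) ↔ (∀ x ∈ w, x ∈ l) ∧ ∀ a ∈ l, replicate (w.count a) a ∈ U a := by
  induction l generalizing w with
  | nil => exact Set.mem_singleton_iff.trans (by simp [eq_nil_iff_forall_not_mem])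
  | cons a l ih =>
    obtain ⟨hal, hl⟩ := nodup_cons.mp hl
    have ih := ih hl (fun b hb => hU b (mem_cons_of_mem a hb))
    have hV : ∀ v ∈ ShuffleList (l.map U), a ∉ v := fun v hv hav => hal (((ih v).mp hv).1 a hav)
    rw [map_cons, ShuffleList, mem_shuffle_iff_of_unary (hU a mem_cons_self) hV, ih]
    have hcount : ∀ b ∈ l, (w.filter (· != a)).count b = w.count b := fun b hb =>
      count_filter (by simpa using fun h : b = a => hal (h ▸ hb))
    have hletters : (∀ x ∈ w.filter (· != a), x ∈ l) ↔ ∀ x ∈ w, x ∈ a :: l := by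
      simp only [mem_filter, bne_iff_ne, mem_cons]
      exact forall_congr' fun x => by tauto
    have hblocks : (∀ b ∈ l, replicate ((w.filter (· != a)).count b) b ∈ U b) ↔
        ∀ b ∈ l, replicate (w.count b) b ∈ U b :=
      forall₂_congr fun b hb => by rw [hcount b hb]
    rw [hletters, hblocks, forall_mem_cons]
    tauto

theorem count_flatMap_univ_replicate [Fintype α] (c : α → ℕ) (b : α) :
    (Finset.univ.toList.flatMap fun a => replicate (c a) a).count b = c b := by
  rw [count_flatMap, Function.comp_def, Finset.sum_map_toList]
  simp [count_replicate]

theorem perm_flatMap_univ_replicate_count [Fintype α] (w : List α) :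
    w ~ Finset.univ.toList.flatMap fun a => replicate (w.count a) a :=
  perm_iff_count.mpr fun b => (count_flatMap_univ_replicate (w.count ·) b).symm

def DependsOnCappedCounts (L : Language α) (T : ℕ) : Prop :=
  ∀ u v : List α, (∀ a, min (u.count a) T = min (v.count a) T) → (u ∈ L ↔ v ∈ L)

namespace DependsOnCappedCounts

variable {L : Language α} {T : ℕ}

theorem isCommutativeLang (hL : DependsOnCappedCounts L T) : IsCommutativeLang L :=
  fun u v huv => hL u v fun a => by rw [huv.count_eq]

theorem isAperiodicLang [Fintype α] (hL : DependsOnCappedCounts L T) : IsAperiodicLang L := by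
  refine ⟨_, inferInstance,
    cappedCountDFA α T {c | ∃ u ∈ L, (fun a => min (u.count a) T) = c},
    cappedCountDFA.isAperiodic, ?_⟩
  ext w
  rw [cappedCountDFA.mem_accepts]
  exact ⟨fun ⟨u, hu, huw⟩ => (hL u w (congrFun huw)).mp hu, fun hw => ⟨w, hw, rfl⟩⟩

end DependsOnCappedCounts

theorem IsCommutativeLang.dependsOnCappedCounts [Fintype α] {σ : Type} [Fintype σ]
    {M : DFA α σ} (hL : IsCommutativeLang M.accepts) (hM : IsAperiodicDFA M) :
    DependsOnCappedCounts M.accepts (Fintype.card σ) := by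
  have hcapped : ∀ w, w ∈ M.accepts ↔ M.eval (Finset.univ.toList.flatMap fun a =>
      replicate (min (w.count a) (Fintype.card σ)) a) ∈ M.accept := fun w => by
    rw [hL _ _ (perm_flatMap_univ_replicate_count w), DFA.mem_accepts]
    unfold DFA.eval
    rw [hM.evalFrom_flatMap_replicate_min le_rfl]
  intro u v huv
  simp only [hcapped, huv]

def unaryCappedLang (a : α) (T t : ℕ) : Language α :=
  {u | (∀ x ∈ u, x = a) ∧ min (u.count a) T = t}

theorem replicate_mem_unaryCappedLang {a : α} {T t m : ℕ} :
    replicate m a ∈ unaryCappedLang a T t ↔ min m T = t := by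
  show (∀ x ∈ replicate m a, x = a) ∧ min ((replicate m a).count a) T = t ↔ _
  simp

theorem unaryAperiodicLang_unaryCappedLang (a : α) (T t : ℕ) :
    UnaryAperiodicLang a (unaryCappedLang a T t) := by
  refine ⟨fun u hu => hu.1, _, inferInstance, cappedCountDFA Unit T {c | c () = t},
    cappedCountDFA.isAperiodic, fun m => ?_⟩
  rw [replicate_mem_unaryCappedLang, cappedCountDFA.mem_accepts]
  simp

end Counting

-- `⋃` is `Set.iUnion`; this restates `Set.mem_iUnion` for the membership instance of `Language`,
-- which `simp` and `rw` do not see through.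
theorem Language.mem_iUnion {α ι : Type} {L : ι → Language α} {w : List α} :
    @Membership.mem _ (Language α) _ (⋃ i, L i) w ↔ ∃ i, w ∈ L i :=
  Set.mem_iUnion

theorem mem_shuffleList_finRange_iff_of_unary {k : ℕ} {U : Fin k → Language (Fin k)}
    (hU : ∀ j, ∀ u ∈ U j, ∀ x ∈ u, x = j) (w : List (Fin k)) :
    w ∈ ShuffleList ((finRange k).map U) ↔ ∀ j, replicate (w.count j) j ∈ U j := by
  simp [mem_shuffleList_map_iff_of_unary (nodup_finRange k) (fun j _ => hU j)]

theorem DependsOnCappedCounts.exists_iUnion_shuffleList {k T : ℕ} {L : Language (Fin k)}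
    (hL : DependsOnCappedCounts L T) :
    ∃ (n : ℕ) (U : Fin n → Fin k → Language (Fin k)),
      (∀ i j, UnaryAperiodicLang j (U i j)) ∧
      L = ⋃ i : Fin n, ShuffleList ((finRange k).map (U i)) := by
  classical
  let S := {c : Fin k → Fin (T + 1) // ∃ w ∈ L, ∀ j, min (w.count j) T = c j}
  let e := Fintype.equivFin S
  let U : Fin (Fintype.card S) → Fin k → Language (Fin k) :=
    fun i j => unaryCappedLang j T ((e.symm i).1 j)
  have hU : ∀ i j, UnaryAperiodicLang j (U i j) :=
    fun i j => unaryAperiodicLang_unaryCappedLang _ _ _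
  refine ⟨_, U, hU, ?_⟩
  ext w
  simp only [Language.mem_iUnion, mem_shuffleList_finRange_iff_of_unary fun j => (hU _ j).1, U,
    replicate_mem_unaryCappedLang]
  constructor
  · intro hw
    exact ⟨e ⟨fun j => ⟨min (w.count j) T, by omega⟩, w, hw, fun j => rfl⟩, fun j => by simp⟩
  · rintro ⟨i, hi⟩
    obtain ⟨u, hu, hcu⟩ := (e.symm i).2
    exact (hL u w fun j => by rw [hcu, hi]).mp hu

theorem dependsOnCappedCounts_iUnion_shuffleList {n k : ℕ}
    {U : Fin n → Fin k → Language (Fin k)} (hU : ∀ i j, UnaryAperiodicLang j (U i j)) :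
    ∃ T, DependsOnCappedCounts (⋃ i : Fin n, ShuffleList ((finRange k).map (U i))) T := by
  choose t ht using fun p : Fin n × Fin k => (hU p.1 p.2).exists_threshold
  refine ⟨Finset.univ.sup t, fun u v huv => ?_⟩
  have hcap : ∀ (w : List (Fin k)) i j,
      replicate (min (w.count j) (Finset.univ.sup t)) j ∈ U i j ↔ replicate (w.count j) j ∈ U i j :=
    fun w i j => ht (i, j) _ (Finset.le_sup (Finset.mem_univ _)) _
  simp only [Language.mem_iUnion, mem_shuffleList_finRange_iff_of_unary fun j => (hU _ j).1,
    ← hcap, huv]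

/-- a language over `Σ = {a_1, …, a_k}` is a commutative aperiodic
language iff it is a finite union of shuffles `U_1 ⧢ ⋯ ⧢ U_k` of unary aperiodic
languages, where `U_j` uses only the letter `a_j`. -/
theorem commutative_aperiodic_lang_normal_form (k : ℕ) (L : Language (Fin k)) :
    (IsCommutativeLang L ∧ IsAperiodicLang L) ↔
    ∃ (n : ℕ) (U : Fin n → Fin k → Language (Fin k)),
      (∀ i j, UnaryAperiodicLang j (U i j)) ∧
      L = ⋃ i : Fin n, ShuffleList ((List.finRange k).map (U i)) := by
  constructor
  · rintro ⟨hcomm, σ, _, M, hM, rfl⟩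
    exact (hcomm.dependsOnCappedCounts hM).exists_iUnion_shuffleList
  · rintro ⟨n, U, hU, rfl⟩
    obtain ⟨T, hT⟩ := dependsOnCappedCounts_iUnion_shuffleList hU
    exact ⟨hT.isCommutativeLang, hT.isAperiodicLang⟩
end

section
/- Let Σ be a finite alphabet, a ∈ Σ, and n, m > 0 coprime natural numbers. Define U = {w | |w|_a ≡ n − 1 (mod n)} and V = {w | |w|_a ≡ m − 1 (mod m)}. Then U and V are commutative group languages with sc(U) = n and sc(V) = m, and the shuffle satisfies sc(U ⧢ V) = nm. -/
open List

/-!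
In every language `{w | P (|w|_a)}` the words `aⁱ` and `aʲ` are Nerode-equivalent exactly when
`P (i + ·) = P (j + ·)`, so lower bounds on state complexity come from separating suffixes `aˣ`.
For `U`, `V` the counter modulo `n` (resp. `m`) is a permutation automaton and `aⁱ`, `i < n`,
are pairwise separated. A word lies in `U ⧢ V` iff `|w|_a + 2 = n c + m d` with `c, d ≥ 1`;
by coprimality this holds for all `|w|_a ≥ nm - 1` (Chinese remaindering) and fails for
`|w|_a = nm - 2` (`n ∣ m d` forces `d ≥ n`). Hence a counter saturating at `nm - 1` recognizes
`U ⧢ V`, while the suffix `a^(nm-2-i)` separates `aⁱ` from every `aʲ`, `i < j < nm`.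
-/

section Basic

variable {α : Type}

theorem DFA.nerode_accepts_of_eval_eq {σ : Type} (M : DFA α σ) {u v : List α}
    (h : M.eval u = M.eval v) : Nerode M.accepts u v := by
  intro x
  change M.evalFrom M.start (u ++ x) ∈ M.accept ↔ M.evalFrom M.start (v ++ x) ∈ M.accept
  rw [DFA.evalFrom_of_append, DFA.evalFrom_of_append]
  change M.evalFrom (M.eval u) x ∈ M.accept ↔ M.evalFrom (M.eval v) x ∈ M.accept
  rw [h]

theorem RecognizedBy.le_of_not_nerode {L : Language α} {k : ℕ} (hL : RecognizedBy L k)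
    (N : ℕ) (f : ℕ → List α) (hf : ∀ i j, i < j → j < N → ¬ Nerode L (f i) (f j)) :
    N ≤ k := by
  obtain ⟨σ, _, M, rfl, rfl⟩ := hL
  have hinj : Function.Injective fun i : Fin N => M.eval (f i) := by
    intro i j hij
    by_contra hne
    rcases lt_or_gt_of_ne (Fin.val_ne_of_ne hne) with hlt | hlt
    · exact hf i j hlt j.2 (M.nerode_accepts_of_eval_eq hij)
    · exact hf j i hlt i.2 (M.nerode_accepts_of_eval_eq hij.symm)
  simpa using Fintype.card_le_of_injective _ hinj

theorem sc_eq_of_recognizedBy {L : Language α} {n : ℕ} (hL : RecognizedBy L n)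
    (hmin : ∀ k, RecognizedBy L k → n ≤ k) : sc L = n :=
  le_antisymm (Nat.sInf_le hL) (hmin _ (Nat.sInf_mem (s := {k | RecognizedBy L k}) ⟨n, hL⟩))

theorem isShuffle_nil_left : ∀ w : List α, IsShuffle [] w w
  | [] => .nil
  | b :: w => .right b (isShuffle_nil_left w)

end Basic

theorem Nat.mod_eq_sub_one_iff_dvd {p i : ℕ} (hp : 0 < p) : i % p = p - 1 ↔ p ∣ i + 1 := by
  rw [Nat.dvd_iff_mod_eq_zero, Nat.add_mod]
  have hi := Nat.mod_lt i hp
  rcases Nat.lt_or_ge 1 p with hp1 | hp1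
  · rw [Nat.mod_eq_of_lt hp1]
    rcases Nat.lt_or_ge (i % p + 1) p with hlt | hge
    · rw [Nat.mod_eq_of_lt hlt]; omega
    · rw [show i % p + 1 = p by omega, Nat.mod_self]; omega
  · obtain rfl : p = 1 := by omega
    simp

theorem exists_mod_eq_sub_one_add_eq {n m : ℕ} (hn : 0 < n) (hm : 0 < m) (hco : n.Coprime m)
    {k : ℕ} (hk : n * m - 1 ≤ k) : ∃ i j, i % n = n - 1 ∧ j % m = m - 1 ∧ i + j = k := by
  have hj := Nat.chineseRemainder_lt_mul hco (k + 1) (m - 1) hn.ne' hm.ne'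
  rcases h : Nat.chineseRemainder hco (k + 1) (m - 1) with ⟨j, hjn, hjm⟩
  rw [h] at hj
  dsimp only at hj
  refine ⟨k - j, j, ?_, ?_, by omega⟩
  · rw [Nat.mod_eq_sub_one_iff_dvd hn, show k - j + 1 = k + 1 - j by omega]
    exact (Nat.modEq_iff_dvd' (by omega)).1 hjn
  · rw [hjm, Nat.mod_eq_of_lt (by omega)]

theorem not_exists_mod_eq_sub_one_add_eq {n m : ℕ} (hco : n.Coprime m) {k : ℕ}
    (hk : k + 2 = n * m) : ¬ ∃ i j, i % n = n - 1 ∧ j % m = m - 1 ∧ i + j = k := by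
  rintro ⟨i, j, hi, hj, rfl⟩
  have hn : 0 < n := Nat.pos_of_ne_zero (by rintro rfl; simp at hk)
  have hm : 0 < m := Nat.pos_of_ne_zero (by rintro rfl; simp at hk)
  obtain ⟨c, hc⟩ := (Nat.mod_eq_sub_one_iff_dvd hn).1 hi
  obtain ⟨d, hd⟩ := (Nat.mod_eq_sub_one_iff_dvd hm).1 hj
  have hsum : n * c + m * d = n * m := by omega
  have hnd : n ∣ d := hco.dvd_of_dvd_mul_left ((Nat.dvd_add_right ⟨c, rfl⟩).1 (hsum ▸ ⟨m, rfl⟩))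
  have hle : n ≤ d := Nat.le_of_dvd (Nat.pos_of_ne_zero (by rintro rfl; simp at hd)) hnd
  have hc0 : 0 < c := Nat.pos_of_ne_zero (by rintro rfl; simp at hc)
  nlinarith

section CountLang

variable {α : Type} [DecidableEq α] (a : α)

def countLang (P : ℕ → Prop) : Language α :=
  {w | P (w.count a)}

@[simp]
theorem mem_countLang {P : ℕ → Prop} {w : List α} : w ∈ countLang a P ↔ P (w.count a) :=
  Iff.rfl

theorem isCommutativeLang_countLang (P : ℕ → Prop) : IsCommutativeLang (countLang a P) :=
  fun _ _ huv => by rw [mem_countLang, mem_countLang, huv.count_eq]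

theorem RecognizedBy.le_of_countLang {P : ℕ → Prop} {k : ℕ}
    (hP : RecognizedBy (countLang a P) k) (N : ℕ)
    (hsep : ∀ i j, i < j → j < N → ∃ x, ¬ (P (i + x) ↔ P (j + x))) : N ≤ k := by
  refine hP.le_of_not_nerode N (fun i => List.replicate i a) fun i j hij hj hner => ?_
  obtain ⟨x, hx⟩ := hsep i j hij hj
  simpa [hx] using hner (List.replicate x a)

theorem IsShuffle.count_eq_s11 {u v w : List α} (h : IsShuffle u v w) :
    w.count a = u.count a + v.count a := by
  induction h with
  | nil => rfl
  | left x _ ih => simp only [List.count_cons, ih]; ring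
  | right y _ ih => simp only [List.count_cons, ih]; ring

theorem exists_isShuffle_replicate :
    ∀ (w : List α) {i : ℕ}, i ≤ w.count a →
      ∃ v, IsShuffle (List.replicate i a) v w ∧ v.count a + i = w.count a
  | [], i, hi => by
    obtain rfl : i = 0 := by simpa using hi
    exact ⟨[], .nil, rfl⟩
  | b :: w, 0, _ => ⟨b :: w, isShuffle_nil_left _, rfl⟩
  | b :: w, i + 1, hi => by
    by_cases hb : b = a
    · subst b
      obtain ⟨v, hsh, hv⟩ := exists_isShuffle_replicate w (i := i) (by simpa using hi)
      exact ⟨v, hsh.left a, by simp [← hv]; omega⟩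
    · obtain ⟨v, hsh, hv⟩ := exists_isShuffle_replicate w (i := i + 1) (by simpa [hb] using hi)
      exact ⟨b :: v, hsh.right b, by simpa [hb] using hv⟩

theorem shuffle_countLang (P Q : ℕ → Prop) :
    Shuffle (countLang a P) (countLang a Q) =
      countLang a (fun k => ∃ i j, P i ∧ Q j ∧ i + j = k) := by
  ext w
  constructor
  · rintro ⟨u, hu, v, hv, hsh⟩
    exact ⟨_, _, hu, hv, (hsh.count_eq_s11 a).symm⟩
  · rintro ⟨i, j, hi, hj, hij⟩
    obtain ⟨v, hsh, hv⟩ := exists_isShuffle_replicate a w (i := i) (by omega)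
    refine ⟨_, ?_, v, ?_, hsh⟩
    · simpa using hi
    · simpa [show v.count a = j by omega] using hj

def countModDFA (p : ℕ) (F : Set (ZMod p)) : DFA α (ZMod p) where
  step q b := if b = a then q + 1 else q
  start := 0
  accept := F

theorem countModDFA_evalFrom (p : ℕ) (F : Set (ZMod p)) :
    ∀ (q : ZMod p) (w : List α), (countModDFA a p F).evalFrom q w = q + w.count a
  | q, [] => by simp
  | q, b :: w => by
    rw [DFA.evalFrom_cons, countModDFA_evalFrom]
    by_cases hb : b = a
    · subst hb; simp [countModDFA]; ring
    · simp [countModDFA, hb]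

theorem countModDFA_accepts (p : ℕ) (F : Set (ZMod p)) :
    (countModDFA a p F).accepts = countLang a (fun k => (k : ZMod p) ∈ F) := by
  ext w
  change (countModDFA a p F).evalFrom 0 w ∈ F ↔ _
  rw [countModDFA_evalFrom, zero_add]
  rfl

theorem isPermDFA_countModDFA (p : ℕ) (F : Set (ZMod p)) : IsPermDFA (countModDFA a p F) := by
  intro b
  by_cases hb : b = a
  · simpa [countModDFA, hb] using (Equiv.addRight (1 : ZMod p)).bijective
  · simp only [countModDFA, hb, if_false]
    exact Function.bijective_id

def countCapDFA (t : ℕ) (P : ℕ → Prop) : DFA α (Fin (t + 1)) where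
  step q b := if b = a then ⟨min (q + 1) t, by omega⟩ else q
  start := 0
  accept := {q | P q}

theorem countCapDFA_evalFrom (t : ℕ) (P : ℕ → Prop) :
    ∀ (q : Fin (t + 1)) (w : List α),
      ((countCapDFA a t P).evalFrom q w : ℕ) = min (q + w.count a) t
  | q, [] => by simpa using q.is_le
  | q, b :: w => by
    rw [DFA.evalFrom_cons, countCapDFA_evalFrom]
    by_cases hb : b = a
    · subst hb; simp [countCapDFA]; omega
    · simp [countCapDFA, hb]

theorem countCapDFA_accepts (t : ℕ) {P : ℕ → Prop} (hP : ∀ k, t ≤ k → (P k ↔ P t)) :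
    (countCapDFA a t P).accepts = countLang a P := by
  ext w
  change P ((countCapDFA a t P).evalFrom 0 w : ℕ) ↔ P (w.count a)
  rw [countCapDFA_evalFrom, Fin.val_zero]
  rcases le_total (w.count a) t with h | h
  · rw [zero_add, min_eq_left h]
  · rw [zero_add, min_eq_right h, hP _ h]

theorem countModDFA_accepts_val (p r : ℕ) :
    (countModDFA a p {q | q.val = r}).accepts = countLang a (· % p = r) := by
  rw [countModDFA_accepts]
  ext w
  simp [ZMod.val_natCast]

theorem isGroupLang_countLang_mod (p r : ℕ) [NeZero p] : IsGroupLang (countLang a (· % p = r)) :=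
  ⟨_, inferInstance, _, isPermDFA_countModDFA a p _, countModDFA_accepts_val a p r⟩

theorem sc_countLang_mod {p r : ℕ} (hr : r < p) : sc (countLang a (· % p = r)) = p := by
  have : NeZero p := ⟨by omega⟩
  refine sc_eq_of_recognizedBy ⟨_, inferInstance, _, ZMod.card p, countModDFA_accepts_val a p r⟩
    fun k hk => hk.le_of_countLang a p fun i j hij hj => ⟨p - i + r, fun h => ?_⟩
  have hi : (i + (p - i + r)) % p = r := by
    rw [show i + (p - i + r) = r + p by omega, Nat.add_mod_right, Nat.mod_eq_of_lt hr]
  have hj : r + (j - i) ≡ r + 0 [MOD p] := by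
    have := h.1 hi
    rw [show j + (p - i + r) = r + (j - i) + p by omega, Nat.add_mod_right] at this
    rw [Nat.ModEq, this, add_zero, Nat.mod_eq_of_lt hr]
  have := Nat.le_of_dvd (by omega) (Nat.modEq_zero_iff_dvd.1 (hj.add_left_cancel' r))
  omega

theorem sc_countLang_add_mod_eq_sub_one {n m : ℕ} (hn : 0 < n) (hm : 0 < m) (hco : n.Coprime m) :
    sc (countLang a fun k => ∃ i j, i % n = n - 1 ∧ j % m = m - 1 ∧ i + j = k) = n * m := by
  have hnm : 0 < n * m := Nat.mul_pos hn hm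
  have hlarge {k : ℕ} (hk : n * m - 1 ≤ k) := exists_mod_eq_sub_one_add_eq hn hm hco hk
  refine sc_eq_of_recognizedBy ⟨_, inferInstance, countCapDFA a (n * m - 1) _,
      by simp only [Fintype.card_fin]; omega,
      countCapDFA_accepts a _ fun k hk => iff_of_true (hlarge hk) (hlarge le_rfl)⟩
    fun k hk => hk.le_of_countLang a (n * m) fun i j hij hj => ⟨n * m - 2 - i, fun h => ?_⟩
  exact not_exists_mod_eq_sub_one_add_eq hco (k := i + (n * m - 2 - i)) (by omega)
    (h.2 (hlarge (by omega)))

end CountLang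

theorem sc_shuffle_group_lower_bound_general {α : Type} [DecidableEq α]
    (a : α) (n m : ℕ) (hn : 0 < n) (hm : 0 < m) (hco : Nat.Coprime n m)
    (U V : Language α)
    (hU : U = {w : List α | w.count a % n = n - 1})
    (hV : V = {w : List α | w.count a % m = m - 1}) :
    IsCommutativeLang U ∧ IsGroupLang U ∧
    IsCommutativeLang V ∧ IsGroupLang V ∧
    sc U = n ∧ sc V = m ∧ sc (Shuffle U V) = n * m := by
  replace hU : U = countLang a (· % n = n - 1) := hU
  replace hV : V = countLang a (· % m = m - 1) := hV
  subst hU hV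
  have : NeZero n := ⟨hn.ne'⟩
  have : NeZero m := ⟨hm.ne'⟩
  refine ⟨isCommutativeLang_countLang a _, isGroupLang_countLang_mod a n _,
    isCommutativeLang_countLang a _, isGroupLang_countLang_mod a m _,
    sc_countLang_mod a (by omega), sc_countLang_mod a (by omega), ?_⟩
  rw [shuffle_countLang]
  exact sc_countLang_add_mod_eq_sub_one a hn hm hco

/-- for coprime `n, m > 0`, the commutative group languages
`U = {w | |w|_a ≡ n - 1 (mod n)}` and `V = {w | |w|_a ≡ m - 1 (mod m)}` have
state complexities `n` and `m`, and their shuffle has state complexity `n m`. -/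
theorem sc_shuffle_group_lower_bound {α : Type} [Fintype α] [DecidableEq α]
    (a : α) (n m : ℕ) (hn : 0 < n) (hm : 0 < m) (hco : Nat.Coprime n m)
    (U V : Language α)
    (hU : U = {w : List α | w.count a % n = n - 1})
    (hV : V = {w : List α | w.count a % m = m - 1}) :
    IsCommutativeLang U ∧ IsGroupLang U ∧
    IsCommutativeLang V ∧ IsGroupLang V ∧
    sc U = n ∧ sc V = m ∧ sc (Shuffle U V) = n * m :=
  sc_shuffle_group_lower_bound_general a n m hn hm hco U V hU hV
end

section
/- Let Σ be a finite alphabet with |Σ| = k ≥ 1 and let N ≥ 1. Consider the finite commutative language L = {a^N | a ∈ Σ}. Then L is recognized by a DFA with kN + 2 states, the upward closure satisfies ↑L = {w | ∃ a ∈ Σ, |w|_a ≥ N}, and sc(↑L) = N^k + 1. -/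
open List

/-! A DFA for `↑L` only has to remember, for each letter, how often it has been read as long as
all these counts stay below `N`, and to move to an accepting sink as soon as one count reaches `N`:
that is `N ^ k + 1` states. Conversely, words whose count vectors are distinct and below `N` have
distinct left quotients with respect to `↑L` (if `a` occurs fewer times in `u` than in `v`, append
`a ^ (N - |v|_a)`), and none of them contains the empty word, unlike the left quotient of `a ^ N`.
So every DFA for `↑L` has at least `N ^ k + 1` states. -/

namespace DFA

variable {α σ : Type*} (M : DFA α σ)

theorem eval_eq_of_append_singleton {f : List α → σ} (h_nil : f [] = M.start)
    (h_step : ∀ w a, f (w ++ [a]) = M.step (f w) a) : M.eval = f := by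
  funext w
  induction w using List.reverseRecOn with
  | nil => exact h_nil.symm
  | append_singleton w a ih => rw [eval_append_singleton, ih, h_step]

theorem card_le_card_of_injective_leftQuotient {ι : Type*} [Fintype ι] [Fintype σ]
    {w : ι → List α} (hw : Function.Injective (M.accepts.leftQuotient ∘ w)) :
    Fintype.card ι ≤ Fintype.card σ := by
  rw [Language.leftQuotient_accepts] at hw
  exact Fintype.card_le_of_injective _ (Function.Injective.of_comp (f := M.acceptsFrom) hw)

end DFA

section

variable {α : Type} [DecidableEq α]

noncomputable def wordOfCounts [Fintype α] (f : α → ℕ) : List α :=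
  (∑ a, Multiset.replicate (f a) a).toList

theorem count_wordOfCounts [Fintype α] (f : α → ℕ) (a : α) :
    (wordOfCounts f).count a = f a := by
  rw [wordOfCounts, ← Multiset.coe_count, Multiset.coe_toList, Multiset.count_sum']
  simp [Multiset.count_replicate]

def someCountGe (N : ℕ) : Language α := {w | ∃ a, N ≤ w.count a}

theorem upClosure_replicate (N : ℕ) :
    UpClosure {w : List α | ∃ a, w = replicate N a} = someCountGe N := by
  ext w
  simp only [UpClosure, someCountGe]
  constructor
  · rintro ⟨_, ⟨a, rfl⟩, h⟩
    exact ⟨a, replicate_sublist_iff.mp h⟩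
  · rintro ⟨a, h⟩
    exact ⟨_, ⟨a, rfl⟩, replicate_sublist_iff.mpr h⟩

theorem count_le_of_leftQuotient_someCountGe_le {N : ℕ} {u v : List α}
    (hv : ∀ a, v.count a < N)
    (h : (someCountGe N).leftQuotient u ≤ (someCountGe N).leftQuotient v) (a : α) :
    u.count a ≤ v.count a := by
  obtain ⟨b, hb⟩ := h (show replicate (N - u.count a) a ∈ _ from ⟨a, by simp; omega⟩)
  rw [count_append, count_replicate] at hb
  split_ifs at hb with hab
  · rw [beq_iff_eq] at hab
    subst hab
    have := hv a
    omega
  · exact absurd (hv b) (by omega)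

theorem pow_card_add_one_le_card_of_accepts_eq_someCountGe [Fintype α] [Nonempty α]
    {σ : Type} [Fintype σ] (N : ℕ) (M : DFA α σ) (hM : M.accepts = someCountGe N) :
    N ^ Fintype.card α + 1 ≤ Fintype.card σ := by
  obtain ⟨a₀⟩ := ‹Nonempty α›
  let w : Option (α → Fin N) → List α :=
    fun q => q.elim (replicate N a₀) fun f => wordOfCounts fun a => f a
  have h_count (f : α → Fin N) (a : α) : (w (some f)).count a = f a := count_wordOfCounts _ a
  have h_lt (f : α → Fin N) (a : α) : (w (some f)).count a < N := h_count f a ▸ (f a).2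
  have h_none : [] ∈ (someCountGe N).leftQuotient (w none) := ⟨a₀, by simp [w]⟩
  have h_some (f : α → Fin N) : [] ∉ (someCountGe N).leftQuotient (w (some f)) :=
    fun ⟨a, ha⟩ => (h_lt f a).not_ge (by simpa using ha)
  have hw : Function.Injective (M.accepts.leftQuotient ∘ w) := by
    rw [hM]
    intro p q (h : (someCountGe N).leftQuotient (w p) = (someCountGe N).leftQuotient (w q))
    rcases p with _ | f <;> rcases q with _ | g
    · rfl
    · exact absurd (h ▸ h_none) (h_some g)
    · exact absurd (h ▸ h_none) (h_some f)
    · refine congrArg some (funext fun a => Fin.ext (le_antisymm ?_ ?_))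
      · simpa only [h_count] using count_le_of_leftQuotient_someCountGe_le (h_lt g) h.le a
      · simpa only [h_count] using count_le_of_leftQuotient_someCountGe_le (h_lt f) h.ge a
  simpa [Fintype.card_option, Fintype.card_fun] using M.card_le_card_of_injective_leftQuotient hw

end

section

variable {α : Type} [DecidableEq α] (N : ℕ)

def replicateState : List α → Option (Option (α × Fin N))
  | [] => some none
  | a :: t => if h : (∀ x ∈ t, x = a) ∧ t.length < N then some (some (a, ⟨t.length, h.2⟩)) else none

/-- `some none` is the start state, `some (some (a, i))` records that `a ^ (i + 1)` has been read,
and `none` is the sink. -/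
def replicateDFA : DFA α (Option (Option (α × Fin N))) where
  step q b := match q with
    | none => none
    | some none => if h : 0 < N then some (some (b, ⟨0, h⟩)) else none
    | some (some (a, i)) => if h : b = a ∧ i + 1 < N then some (some (a, ⟨i + 1, h.2⟩)) else none
  start := some none
  accept := {q | ∃ a i, q = some (some (a, i)) ∧ i + 1 = N}

theorem replicateDFA_eval : (replicateDFA N).eval = replicateState (α := α) N := by
  refine DFA.eval_eq_of_append_singleton _ rfl ?_
  rintro (_ | ⟨a, t⟩) b
  · by_cases hN : 0 < N <;> simp [replicateState, replicateDFA, hN]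
  · simp only [cons_append, replicateState, replicateDFA, forall_mem_append, forall_mem_singleton,
      length_append, length_singleton]
    grind

theorem replicateDFA_accepts (hN : 0 < N) :
    (replicateDFA N).accepts = {w : List α | ∃ a, w = replicate N a} := by
  ext w
  rw [DFA.mem_accepts, replicateDFA_eval]
  change _ ↔ ∃ a, w = replicate N a
  rcases w with _ | ⟨a, t⟩
  · simp [replicateState, replicateDFA, eq_comm (a := []), hN.ne']
  · simp [replicateState, replicateDFA, eq_replicate_iff]
    exact ⟨fun ⟨⟨h, _⟩, hl⟩ => ⟨hl, h⟩, fun ⟨hl, h⟩ => ⟨⟨h, by omega⟩, hl⟩⟩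

variable [Fintype α]

def cappedCounts (w : List α) : Option (α → Fin N) :=
  if h : ∀ a, w.count a < N then some fun a => ⟨w.count a, h a⟩ else none

def countingDFA (hN : 0 < N) : DFA α (Option (α → Fin N)) where
  step q b := q.bind fun f =>
    if h : f b + 1 < N then some (Function.update f b ⟨f b + 1, h⟩) else none
  start := some fun _ => ⟨0, hN⟩
  accept := {none}

theorem countingDFA_eval (hN : 0 < N) : (countingDFA N hN).eval = cappedCounts (α := α) N := by
  refine DFA.eval_eq_of_append_singleton _ (by simp [cappedCounts, countingDFA, hN]) ?_
  intro w b
  have h_count (a : α) : (w ++ [b]).count a = w.count a + if b = a then 1 else 0 := by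
    simp [count_append, count_singleton]
  by_cases hw : ∀ a, w.count a < N
  · simp only [cappedCounts, dif_pos hw, countingDFA, Option.bind_some]
    by_cases hb : w.count b + 1 < N
    · have hwb : ∀ a, (w ++ [b]).count a < N := fun a => by
        rw [h_count]; split_ifs with hab <;> [exact hab ▸ hb; simpa using hw a]
      rw [dif_pos hb, dif_pos hwb]
      congr
      funext a
      ext
      by_cases hab : a = b
      · subst hab; simp [h_count]
      · simp [h_count, hab, Ne.symm hab]
    · rw [dif_neg hb, dif_neg fun hwb => hb (by simpa [h_count] using hwb b)]
  · rw [cappedCounts, cappedCounts, dif_neg hw, dif_neg fun hwb => hw fun a => ?_]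
    · rfl
    · have := hwb a
      rw [h_count] at this
      omega

theorem countingDFA_accepts (hN : 0 < N) :
    (countingDFA N hN).accepts = someCountGe (α := α) N := by
  ext w
  rw [DFA.mem_accepts, countingDFA_eval, cappedCounts]
  by_cases hw : ∀ a, w.count a < N
  · rw [dif_pos hw]
    exact iff_of_false (by simp [countingDFA]) fun ⟨a, ha⟩ => (hw a).not_ge ha
  · rw [dif_neg hw]
    exact iff_of_true rfl (by simp only [not_forall, not_lt] at hw; exact hw)

end

/-- for `L = {a^N | a ∈ Σ}` over an alphabet of size `k ≥ 1` with
`N ≥ 1`, `L` is recognized by a DFA with `kN + 2` states, its upward closure is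
`{w | ∃ a, |w|_a ≥ N}`, and `sc (↑L) = N ^ k + 1`. -/
theorem sc_upClosure_finite_lower_bound {α : Type} [Fintype α] [DecidableEq α]
    (k N : ℕ) (hk : Fintype.card α = k) (hk1 : 1 ≤ k) (hN : 1 ≤ N)
    (L : Language α) (hL : L = {w : List α | ∃ a : α, w = List.replicate N a}) :
    (∃ (σ : Type) (_ : Fintype σ) (M : DFA α σ),
      Fintype.card σ = k * N + 2 ∧ M.accepts = L) ∧
    UpClosure L = {w : List α | ∃ a : α, N ≤ w.count a} ∧
    sc (UpClosure L) = N ^ k + 1 := by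
  subst hL hk
  have : Nonempty α := Fintype.card_pos_iff.mp hk1
  rw [upClosure_replicate]
  refine ⟨⟨_, inferInstance, replicateDFA N, by simp [Fintype.card_option],
    replicateDFA_accepts N hN⟩, rfl, IsLeast.csInf_eq ⟨?_, ?_⟩⟩
  · exact ⟨_, inferInstance, countingDFA N hN, by simp [Fintype.card_option],
      countingDFA_accepts N hN⟩
  · rintro n ⟨σ, _, M, rfl, hM⟩
    exact pow_card_add_one_le_card_of_accepts_eq_someCountGe N M hM
end
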